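/- arXiv:1812.02434 — 4 statements merged into one kernel-verified Lean document; each statement's English description precedes it below -/
import Mathlib

section
/- Let p/q be an irreducible fraction with 0 < p/q < 1 and let [a_1,…,a_n] be a continued fraction expansion of p/q. Then the top vertex of the ancestral triangle AT(p/q), i.e. the new vertex introduced by the last triangle T_N, is labeled p/q. -/
/-!
Ancestral triangles of continued fractions (Yamada / Farey diagrams),
following "Cluster variables and Alexander polynomials of 2-bridge knots".
-/

noncomputable section

open scoped BigOperators

attribute [local instance] Classical.propDecidable

namespace TwoBridge

/-- The continued fraction `[a₁,…,aₙ] = 1/(a₁ + 1/(a₂ + ⋯ + 1/aₙ))`. -/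
def cf : List ℕ → ℚ
  | [] => 0
  | a :: t => 1 / ((a : ℚ) + cf t)

/-- Partial sums `l_k = a₁ + ⋯ + a_k`. -/
def ell (a : List ℕ) (k : ℕ) : ℕ := (a.take k).sum

/-- The index of the fan containing the `i`-th triangle (1-based): the least `k` with
`i ≤ l_k − 1`.  Fan 1 consists of `T_1, …, T_{a₁−1}` and, for `k ≥ 2`, fan `k` consists of
`T_{l_{k−1}}, …, T_{l_k − 1}`. -/
def fanIdx (a : List ℕ) (i : ℕ) : ℕ := sInf {k | i < ell a k}

/-- The `i`-th triangle (1-based) of the ancestral triangle of `[a₁,…,aₙ]` is a *right*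
triangle iff it lies in an odd-indexed fan (first `a₁ − 1` triangles are right, the next
`a₂` left, the next `a₃` right, and so on alternately). -/
def isRight (a : List ℕ) (i : ℕ) : Prop := Odd (fanIdx a i)

/-- Vertex indices of the ancestral triangle: `0 ↦ 0/1`, `1 ↦ 1/1`, and `j + 1 ↦` the apex
(new vertex) of the triangle `T_j`.  `edgeIdx a i` is the pair of vertex indices
(left endpoint, right endpoint) of the most recently created edge after stacking `i`
triangles; the triangle `T_{i+1}` is stacked on this edge. -/
def edgeIdx (a : List ℕ) : ℕ → ℕ × ℕ
  | 0 => (0, 1)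
  | i + 1 => if isRight a (i + 1) then ((edgeIdx a i).1, i + 2) else (i + 2, (edgeIdx a i).2)

/-- The labels (numerator, denominator) of the endpoints of the active edge after stacking
`i` triangles; the new vertex of each triangle is labelled by the mediant of the two
endpoints of the edge it is stacked on. -/
def edgeLbl (a : List ℕ) : ℕ → (ℕ × ℕ) × (ℕ × ℕ)
  | 0 => ((0, 1), (1, 1))
  | i + 1 =>
      if isRight a (i + 1) then
        ((edgeLbl a i).1,
          ((edgeLbl a i).1.1 + (edgeLbl a i).2.1, (edgeLbl a i).1.2 + (edgeLbl a i).2.2))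
      else
        (((edgeLbl a i).1.1 + (edgeLbl a i).2.1, (edgeLbl a i).1.2 + (edgeLbl a i).2.2),
          (edgeLbl a i).2)

/-- The label (numerator, denominator) of the vertex with index `v`. -/
def vtxLabel (a : List ℕ) (v : ℕ) : ℕ × ℕ :=
  if v = 0 then (0, 1)
  else if v = 1 then (1, 1)
  else ((edgeLbl a (v - 2)).1.1 + (edgeLbl a (v - 2)).2.1,
        (edgeLbl a (v - 2)).1.2 + (edgeLbl a (v - 2)).2.2)

/-- `u` and `w` are joined by an edge of the ancestral triangle. -/
def IsEdgeAT (a : List ℕ) (u w : ℕ) : Prop :=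
  (u = 0 ∧ w = 1) ∨ (u = 1 ∧ w = 0) ∨
    (2 ≤ u ∧ (w = (edgeIdx a (u - 2)).1 ∨ w = (edgeIdx a (u - 2)).2)) ∨
    (2 ≤ w ∧ (u = (edgeIdx a (w - 2)).1 ∨ u = (edgeIdx a (w - 2)).2))

/-- A step of a path: an edge of the ancestral triangle along which the denominator of the
vertex label strictly decreases. -/
def IsStep (a : List ℕ) (u w : ℕ) : Prop :=
  IsEdgeAT a u w ∧ (vtxLabel a w).2 < (vtxLabel a u).2

/-- `IsPathFrom a s γ` : `γ` is a path of the ancestral triangle of `a` starting at the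
vertex with index `s` and ending at `0/1` or `1/1`, the denominator of the label strictly
decreasing along every edge. -/
def IsPathFrom (a : List ℕ) (s : ℕ) (γ : List ℕ) : Prop :=
  γ.head? = some s ∧ (γ.getLast? = some 0 ∨ γ.getLast? = some 1) ∧ List.Chain' (IsStep a) γ

/-- The (indices of the) triangles cut off to the left of the path by a single step from
vertex `u` down to vertex `w`. -/
def stepLeft (a : List ℕ) (u w : ℕ) : Finset ℕ :=
  if 2 ≤ u ∧ w = (edgeIdx a (u - 2)).2 then Finset.Ioc (w - 1) (u - 1) else ∅

/-- The set `S_γ` of (indices of) triangles lying on the left side of the path `γ`. -/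
def pathLeftSet (a : List ℕ) (γ : List ℕ) : Finset ℕ :=
  (γ.zip γ.tail).foldr (fun p s => stepLeft a p.1 p.2 ∪ s) ∅


/-! ### Auxiliary development for `top_vertex_label` -/

/-- Convergent data: `conv a k = ((p_{k-1}, q_{k-1}), (p_k, q_k))` where `p_k/q_k` is the
`k`-th convergent of `[0; a₁, a₂, …]`. -/
def conv (a : List ℕ) : ℕ → (ℕ × ℕ) × (ℕ × ℕ)
  | 0 => ((1, 0), (0, 1))
  | k + 1 =>
      ((conv a k).2,
        (a.getD k 0 * (conv a k).2.1 + (conv a k).1.1,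
         a.getD k 0 * (conv a k).2.2 + (conv a k).1.2))

lemma ell_zero (a : List ℕ) : ell a 0 = 0 := rfl

lemma ell_succ (a : List ℕ) (k : ℕ) : ell a (k + 1) = ell a k + a.getD k 0 := by
  unfold ell
  rw [List.take_succ, List.sum_append]
  rcases Nat.lt_or_ge k a.length with h | h
  · simp [List.getD, List.getElem?_eq_getElem h]
  · simp [List.getD, List.getElem?_eq_none h]

lemma ell_mono (a : List ℕ) : Monotone (ell a) := by
  apply monotone_nat_of_le_succ
  intro k
  rw [ell_succ]
  exact Nat.le_add_right _ _

lemma ell_length (a : List ℕ) : ell a a.length = a.sum := by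
  simp [ell]

lemma getD_pos (a : List ℕ) (hpos : ∀ x ∈ a, 0 < x) {k : ℕ} (hk : k < a.length) :
    0 < a.getD k 0 := by
  rw [List.getD_eq_getElem _ _ hk]
  exact hpos _ (List.getElem_mem hk)

lemma fanIdx_eq (a : List ℕ) {k i : ℕ} (h1 : ell a k ≤ i) (h2 : i < ell a (k + 1)) :
    fanIdx a i = k + 1 := by
  have hmem : k + 1 ∈ {j | i < ell a j} := h2
  refine le_antisymm (Nat.sInf_le hmem) ?_
  by_contra hcon
  push_neg at hcon
  have hm : sInf {j | i < ell a j} ∈ {j | i < ell a j} := Nat.sInf_mem ⟨_, hmem⟩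
  have hle : ell a (sInf {j | i < ell a j}) ≤ ell a k :=
    ell_mono a (Nat.lt_succ_iff.mp hcon)
  exact absurd (lt_of_lt_of_le hm (le_trans hle h1)) (lt_irrefl i)

lemma edgeLbl_right (a : List ℕ) (i j : ℕ) (h : ∀ m < j, isRight a (i + 1 + m)) :
    edgeLbl a (i + j) = ((edgeLbl a i).1,
      (j * (edgeLbl a i).1.1 + (edgeLbl a i).2.1,
       j * (edgeLbl a i).1.2 + (edgeLbl a i).2.2)) := by
  induction j with
  | zero => simp
  | succ j ih =>
    have hr : isRight a (i + j + 1) := by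
      have := h j (Nat.lt_succ_self j)
      rwa [show i + 1 + j = i + j + 1 by ring] at this
    have hrec : edgeLbl a (i + (j + 1)) = edgeLbl a ((i + j) + 1) := by
      rw [show i + (j + 1) = (i + j) + 1 by ring]
    rw [hrec, edgeLbl, if_pos hr, ih (fun m hm => h m (Nat.lt_succ_of_lt hm))]
    refine Prod.ext rfl (Prod.ext ?_ ?_) <;> simp <;> ring

lemma edgeLbl_left (a : List ℕ) (i j : ℕ) (h : ∀ m < j, ¬ isRight a (i + 1 + m)) :
    edgeLbl a (i + j) = ((j * (edgeLbl a i).2.1 + (edgeLbl a i).1.1,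
       j * (edgeLbl a i).2.2 + (edgeLbl a i).1.2), (edgeLbl a i).2) := by
  induction j with
  | zero => simp
  | succ j ih =>
    have hr : ¬ isRight a (i + j + 1) := by
      have := h j (Nat.lt_succ_self j)
      rwa [show i + 1 + j = i + j + 1 by ring] at this
    have hrec : edgeLbl a (i + (j + 1)) = edgeLbl a ((i + j) + 1) := by
      rw [show i + (j + 1) = (i + j) + 1 by ring]
    rw [hrec, edgeLbl, if_neg hr, ih (fun m hm => h m (Nat.lt_succ_of_lt hm))]
    refine Prod.ext (Prod.ext ?_ ?_) rfl <;> simp <;> ring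

lemma ell_one_pos (a : List ℕ) (hpos : ∀ x ∈ a, 0 < x) (hlen : 1 ≤ a.length) :
    0 < ell a 1 := by
  rw [ell_succ, ell_zero]
  simpa using getD_pos a hpos hlen

/-- State after completing fan `k` (`1 ≤ k ≤ n`). -/
lemma state (a : List ℕ) (hpos : ∀ x ∈ a, 0 < x) :
    ∀ k, 1 ≤ k → k ≤ a.length →
      edgeLbl a (ell a k - 1) =
        if Odd k then conv a k else ((conv a k).2, (conv a k).1) := by
  intro k
  induction k with
  | zero => intro h; omega
  | succ k ih =>
    intro _ hk1
    rcases Nat.eq_zero_or_pos k with rfl | hkpos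
    · -- base case: fan 1
      have ha1 : 0 < a.getD 0 0 := getD_pos a hpos hk1
      have hdir : ∀ m < a.getD 0 0 - 1, isRight a (0 + 1 + m) := by
        intro m hm
        unfold isRight
        rw [fanIdx_eq a (k := 0) (by simp [ell_zero]) (by rw [ell_succ, ell_zero]; omega)]
        exact odd_one
      have hres : edgeLbl a (ell a 1 - 1) = ((0,1), (1, a.getD 0 0)) := by
        rw [show ell a 1 - 1 = 0 + (a.getD 0 0 - 1) from by rw [ell_succ, ell_zero]; omega,
          edgeLbl_right a 0 _ hdir, show edgeLbl a 0 = ((0,1),(1,1)) from rfl]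
        simp [Prod.ext_iff]
        simp only [List.getD_eq_getElem?_getD] at ha1
        omega
      rw [hres, if_pos (by decide : Odd (0 + 1))]
      refine Prod.ext rfl (Prod.ext (by simp [conv]) (by simp [conv]))
    · -- inductive step: fan k+1
      have hIH := ih hkpos (le_of_lt hk1)
      have hc : 0 < a.getD k 0 := getD_pos a hpos hk1
      have hek : 0 < ell a k := lt_of_lt_of_le (ell_one_pos a hpos (le_trans hkpos (le_of_lt hk1))) (ell_mono a hkpos)
      have hidx : ∀ m < a.getD k 0, fanIdx a (ell a k + m) = k + 1 := by
        intro m hm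
        exact fanIdx_eq a (Nat.le_add_right _ _) (by rw [ell_succ]; omega)
      have hstep : ell a (k + 1) - 1 = (ell a k - 1) + a.getD k 0 := by
        rw [ell_succ]; omega
      have hshift : ∀ m, (ell a k - 1) + 1 + m = ell a k + m := by intro m; omega
      rcases Nat.even_or_odd (k + 1) with hev | hod
      · -- k+1 even : left steps
        have hdir : ∀ m < a.getD k 0, ¬ isRight a ((ell a k - 1) + 1 + m) := by
          intro m hm
          unfold isRight
          rw [hshift m, hidx m hm]
          exact Nat.not_odd_iff_even.mpr hev
        have hkodd : Odd k := Nat.not_even_iff_odd.mp (Nat.even_add_one.mp hev)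
        rw [hstep, edgeLbl_left a _ _ hdir, hIH, if_pos hkodd,
          if_neg (Nat.not_odd_iff_even.mpr hev)]
        simp [conv]
      · -- k+1 odd : right steps
        have hdir : ∀ m < a.getD k 0, isRight a ((ell a k - 1) + 1 + m) := by
          intro m hm
          unfold isRight
          rw [hshift m, hidx m hm]
          exact hod
        have hkev : ¬ Odd k := Nat.odd_add_one.mp hod
        rw [hstep, edgeLbl_right a _ _ hdir, hIH, if_neg hkev, if_pos hod]
        simp [conv]


/-- Continued fraction with a tail value. -/
def cfx : List ℕ → ℚ → ℚ
  | [], x => x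
  | a :: t, x => 1 / ((a : ℚ) + cfx t x)

lemma cf_eq_cfx (a : List ℕ) : cf a = cfx a 0 := by
  induction a with
  | nil => simp [cf, cfx]
  | cons h t ih => simp [cf, cfx, ih]

lemma cfx_append (a : List ℕ) (y : ℕ) (x : ℚ) :
    cfx (a ++ [y]) x = cfx a (1 / ((y : ℚ) + x)) := by
  induction a with
  | nil => rfl
  | cons h t ih => simp [cfx, ih]

lemma conv_append (a b : List ℕ) : ∀ k, k ≤ a.length → conv (a ++ b) k = conv a k := by
  intro k
  induction k with
  | zero => intro _; rfl
  | succ k ih =>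
    intro hk
    have hk' : k ≤ a.length := by omega
    have hg : (a ++ b).getD k 0 = a.getD k 0 := by
      rw [List.getD_eq_getElem?_getD, List.getD_eq_getElem?_getD,
        List.getElem?_append_left (by omega)]
    simp only [conv, ih hk', hg]

lemma conv_q_pos (a : List ℕ) (hpos : ∀ x ∈ a, 0 < x) : ∀ k, k ≤ a.length →
    0 < (conv a k).2.2 := by
  intro k
  induction k with
  | zero => intro _; norm_num [conv]
  | succ k ih =>
    intro hk
    have h1 := ih (by omega)
    have h2 := getD_pos a hpos (show k < a.length by omega)
    show 0 < a.getD k 0 * (conv a k).2.2 + (conv a k).1.2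
    exact Nat.lt_of_lt_of_le (Nat.mul_pos h2 h1) (Nat.le_add_right _ _)

lemma cfx_val : ∀ (a : List ℕ), (∀ z ∈ a, 0 < z) → ∀ x : ℚ, 0 ≤ x →
    cfx a x = (((conv a a.length).2.1 : ℚ) + x * ((conv a a.length).1.1 : ℚ)) /
      (((conv a a.length).2.2 : ℚ) + x * ((conv a a.length).1.2 : ℚ)) := by
  intro a
  induction a using List.reverseRecOn with
  | nil => intro _ x hx; simp [cfx, conv]
  | append_singleton t y ih =>
    intro hpos x hx
    have hy : 0 < y := hpos y (by simp)
    have hpt : ∀ z ∈ t, 0 < z := fun z hz => hpos z (by simp [hz])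
    have hy1 : (1:ℚ) ≤ (y:ℚ) := by exact_mod_cast hy
    have hyx : (0:ℚ) < (y:ℚ) + x := by linarith
    have hx' : (0:ℚ) ≤ 1 / ((y:ℚ) + x) := by positivity
    rw [cfx_append, ih hpt _ hx']
    have hlen : (t ++ [y]).length = t.length + 1 := by simp
    have hc1 : conv (t ++ [y]) t.length = conv t t.length := conv_append t [y] _ le_rfl
    have hgd : (t ++ [y]).getD t.length 0 = y := by
      rw [List.getD_eq_getElem?_getD, List.getElem?_append_right le_rfl]
      simp
    rw [hlen]
    simp only [conv, hc1, hgd]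
    have hq : (0:ℚ) < ((conv t t.length).2.2 : ℚ) := by
      exact_mod_cast conv_q_pos t hpt _ le_rfl
    have hq' : (0:ℚ) ≤ ((conv t t.length).1.2 : ℚ) := by positivity
    have hq1' : (0:ℚ) ≤ ((conv t t.length).1.1 : ℚ) := by positivity
    have hden : (0:ℚ) < ((conv t t.length).2.2 : ℚ) + (1 / ((y:ℚ)+x)) * ((conv t t.length).1.2 : ℚ) := by
      positivity
    have hden2 : (0:ℚ) < (((y:ℚ) * (conv t t.length).2.2 + (conv t t.length).1.2) + x * (conv t t.length).2.2) := by
      have h1 : (0:ℚ) < (y:ℚ) * (conv t t.length).2.2 := by nlinarith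
      have h2 : (0:ℚ) ≤ x * (conv t t.length).2.2 := mul_nonneg hx hq.le
      linarith
    rw [div_eq_div_iff hden.ne' (ne_of_gt (by push_cast; linarith [hden2]))]
    push_cast
    field_simp [hyx.ne']
    ring

lemma conv_det (a : List ℕ) : ∀ k,
    ((conv a k).1.1 * (conv a k).2.2 : ℤ) - (conv a k).2.1 * (conv a k).1.2 = (-1) ^ k := by
  intro k
  induction k with
  | zero => simp [conv]
  | succ k ih =>
    simp only [conv]
    push_cast
    linear_combination -ih

lemma conv_coprime (a : List ℕ) (k : ℕ) :
    Nat.Coprime (conv a k).2.1 (conv a k).2.2 := by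
  have h := conv_det a k
  rw [← Nat.isCoprime_iff_coprime]
  rcases Nat.even_or_odd k with he | ho
  · rw [he.neg_one_pow] at h
    exact ⟨-((conv a k).1.2 : ℤ), ((conv a k).1.1 : ℤ), by linear_combination h⟩
  · rw [ho.neg_one_pow] at h
    exact ⟨((conv a k).1.2 : ℤ), -((conv a k).1.1 : ℤ), by linear_combination -h⟩

/-- The mediant of the active edge after `a.sum - 2` triangles is the last convergent. -/
lemma top_label (a : List ℕ) (hpos : ∀ x ∈ a, 0 < x) (hlen : 1 ≤ a.length)
    (hsum : 2 ≤ a.sum) :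
    ((edgeLbl a (a.sum - 2)).1.1 + (edgeLbl a (a.sum - 2)).2.1,
     (edgeLbl a (a.sum - 2)).1.2 + (edgeLbl a (a.sum - 2)).2.2) = (conv a a.length).2 := by
  rcases Nat.lt_or_ge a.length 2 with h2 | h2
  · -- length 1
    have hl1 : a.length = 1 := by omega
    have hsum1 : a.sum = a.getD 0 0 := by
      rw [← ell_length a, hl1, ell_succ, ell_zero, Nat.zero_add]
    obtain ⟨d, hd⟩ : ∃ d, a.getD 0 0 = d + 2 := ⟨a.getD 0 0 - 2, by omega⟩
    have hdir : ∀ m < d, isRight a (0 + 1 + m) := by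
      intro m hm
      unfold isRight
      rw [fanIdx_eq a (k := 0) (by simp [ell_zero]) (by rw [ell_succ, ell_zero]; omega)]
      exact odd_one
    have hidx : a.sum - 2 = 0 + d := by omega
    rw [hidx, edgeLbl_right a 0 d hdir, hl1,
      show edgeLbl a 0 = ((0,1),(1,1)) from rfl]
    simp only [conv, hd]
    refine Prod.ext (by simp) (by simp; ring)
  · -- length ≥ 2
    set n := a.length with hn
    have hk1 : 1 ≤ n - 1 := by omega
    have hkn : n - 1 ≤ n := by omega
    have hst := state a hpos (n - 1) hk1 (by omega)
    have hc : 0 < a.getD (n - 1) 0 := getD_pos a hpos (by omega)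
    obtain ⟨j, hj⟩ : ∃ j, a.getD (n - 1) 0 = j + 1 := ⟨a.getD (n - 1) 0 - 1, by omega⟩
    have hek : 0 < ell a (n - 1) :=
      lt_of_lt_of_le (ell_one_pos a hpos (by omega)) (ell_mono a hk1)
    have hsucc : n - 1 + 1 = n := by omega
    have hells : ell a n = ell a (n - 1) + a.getD (n - 1) 0 := by
      rw [← hsucc, ell_succ, hsucc]
    have hsumell : a.sum = ell a n := (ell_length a).symm
    have hidx2 : a.sum - 2 = (ell a (n - 1) - 1) + j := by omega
    have hfan : ∀ m < j, fanIdx a ((ell a (n - 1) - 1) + 1 + m) = n := by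
      intro m hm
      rw [show (ell a (n - 1) - 1) + 1 + m = ell a (n - 1) + m by omega]
      rw [← hsucc]
      exact fanIdx_eq a (Nat.le_add_right _ _) (by rw [ell_succ, hsucc]; omega)
    rcases Nat.even_or_odd n with hev | hod
    · -- n even : last fan is left
      have hdir : ∀ m < j, ¬ isRight a ((ell a (n - 1) - 1) + 1 + m) := by
        intro m hm
        unfold isRight
        rw [hfan m hm]
        exact Nat.not_odd_iff_even.mpr hev
      have hkodd : Odd (n - 1) := by
        rcases Nat.even_or_odd (n - 1) with h | h
        · exfalso
          have := h.add_one
          rw [hsucc] at this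
          exact (Nat.not_odd_iff_even.mpr hev) this
        · exact h
      rw [hidx2, edgeLbl_left a _ _ hdir, hst, if_pos hkodd]
      rw [show conv a n = conv a ((n-1)+1) by rw [hsucc]]
      simp only [conv, hj]
      refine Prod.ext (by simp; ring) (by simp; ring)
    · -- n odd : last fan is right
      have hdir : ∀ m < j, isRight a ((ell a (n - 1) - 1) + 1 + m) := by
        intro m hm
        unfold isRight
        rw [hfan m hm]
        exact hod
      have hkev : ¬ Odd (n - 1) := by
        intro h
        have := h.add_one
        rw [hsucc] at this
        exact (Nat.not_even_iff_odd.mpr hod) this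
      rw [hidx2, edgeLbl_right a _ _ hdir, hst, if_neg hkev]
      rw [show conv a n = conv a ((n-1)+1) by rw [hsucc]]
      simp only [conv, hj]
      refine Prod.ext (by simp; ring) (by simp; ring)


/-- **Proposition.**  Let `p/q` be an irreducible fraction with `0 < p/q < 1` and let
`[a₁,…,aₙ]` be a continued fraction expansion of `p/q`.  Then the top vertex of the
ancestral triangle `AT(p/q)`, i.e. the new vertex introduced by the last triangle `T_N`
(its vertex index is `N + 1 = a₁ + ⋯ + aₙ`), is labeled `p/q`. -/
theorem top_vertex_label (a : List ℕ) (p q : ℕ)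
    (hpos : ∀ x ∈ a, 0 < x) (hne : a ≠ [])
    (hp : 0 < p) (hlt : p < q) (hcop : Nat.Coprime p q)
    (hval : cf a = (p : ℚ) / q) :
    vtxLabel a a.sum = (p, q) := by
  have hlen : 1 ≤ a.length := by
    cases a with
    | nil => exact absurd rfl hne
    | cons x t => simp
  have hq0 : 0 < q := lt_trans hp hlt
  have hs1 : 1 ≤ a.sum := by
    calc 1 ≤ ell a 1 := ell_one_pos a hpos hlen
    _ ≤ ell a a.length := ell_mono a hlen
    _ = a.sum := ell_length a
  have hs2 : 2 ≤ a.sum := by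
    by_contra hcon
    have hsum1 : a.sum = 1 := by omega
    have ha1 : a = [1] := by
      cases a with
      | nil => exact absurd rfl hne
      | cons x t =>
        cases t with
        | nil =>
          simp only [List.sum_cons, List.sum_nil, Nat.add_zero] at hsum1
          rw [hsum1]
        | cons y t' =>
          exfalso
          have hx : 0 < x := hpos x (by simp)
          have hy : 0 < y := hpos y (by simp)
          have : x + (y + t'.sum) = 1 := by simpa using hsum1
          omega
    have hone : cf a = 1 := by rw [ha1]; norm_num [cf]
    rw [hval] at hone
    have hqne : ((q:ℚ)) ≠ 0 := by exact_mod_cast hq0.ne'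
    have : (p : ℚ) = q := by field_simp at hone; exact_mod_cast hone
    have : p = q := by exact_mod_cast this
    omega
  -- the label of the top vertex is the last convergent
  have hmed := top_label a hpos hlen hs2
  -- the value of the last convergent is cf a = p / q
  have hvv : ((conv a a.length).2.1 : ℚ) / ((conv a a.length).2.2 : ℚ) = (p:ℚ)/(q:ℚ) := by
    rw [← hval, cf_eq_cfx, cfx_val a hpos 0 le_rfl]
    simp
  have hcop2 := conv_coprime a a.length
  have hQpos : 0 < (conv a a.length).2.2 := conv_q_pos a hpos _ le_rfl
  have hQne : (((conv a a.length).2.2 : ℚ)) ≠ 0 := by exact_mod_cast hQpos.ne'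
  have hqne : ((q:ℚ)) ≠ 0 := by exact_mod_cast hq0.ne'
  have hcross : (conv a a.length).2.1 * q = p * (conv a a.length).2.2 := by
    rw [div_eq_div_iff hQne hqne] at hvv
    exact_mod_cast hvv
  have hPp : (conv a a.length).2.1 = p := by
    have h1 : (conv a a.length).2.1 ∣ p * (conv a a.length).2.2 := ⟨q, hcross.symm⟩
    have h2 : p ∣ (conv a a.length).2.1 * q := ⟨(conv a a.length).2.2, hcross⟩
    exact Nat.dvd_antisymm (hcop2.dvd_of_dvd_mul_right h1) (hcop.dvd_of_dvd_mul_right h2)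
  have hQq : (conv a a.length).2.2 = q := by
    rw [hPp] at hcross
    exact (Nat.eq_of_mul_eq_mul_left hp hcross).symm
  have hv0 : a.sum ≠ 0 := by omega
  have hv1 : a.sum ≠ 1 := by omega
  unfold vtxLabel
  rw [if_neg hv0, if_neg hv1, hmed]
  rw [Prod.ext_iff]
  exact ⟨hPp, hQq⟩


end TwoBridge

end
end

section
/- Let p/q be an irreducible fraction with 0 < p/q < 1 and p/q = [a_1,…,a_n] with a_1 ≥ 2. Then AT((q−p)/q) is the mirror image of AT(p/q): (q−p)/q = [1, a_1−1, a_2,…,a_n], both ancestral triangles consist of the same number N = a_1 + ⋯ + a_n − 1 of stacked triangles, and for every 1 ≤ i ≤ N the triangle T_i of AT((q−p)/q) is a left triangle if and only if the triangle T_i of AT(p/q) is a right triangle. -/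
/-!
Ancestral triangles of continued fractions (Yamada / Farey diagrams),
following "Cluster variables and Alexander polynomials of 2-bridge knots".

With `x = [a₂,…,aₙ] ≥ 0`, the value identity is `1/(1 + 1/(a₁ − 1 + x)) = 1 − 1/(a₁ + x)`.
The partial sums of `[1, a₁−1, a₂,…,aₙ]` are `0, 1, l₁, l₂, …`, so for `i ≥ 1` the triangle
`T_i` lies in fan `k + 1` of the mirrored triangle exactly when it lies in fan `k` of the
original one, and this shift of the fan index swaps right and left.
-/

noncomputable section

open scoped BigOperators

attribute [local instance] Classical.propDecidable

namespace TwoBridge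

lemma cf_nonneg : ∀ l : List ℕ, 0 ≤ cf l
  | [] => le_rfl
  | a :: t => by
    have := cf_nonneg t
    rw [cf]
    positivity

lemma cf_one_cons_pred_cons {a : ℕ} (ha : 2 ≤ a) (t : List ℕ) :
    cf (1 :: (a - 1) :: t) = 1 - cf (a :: t) := by
  have ha' : (2 : ℚ) ≤ a := by exact_mod_cast ha
  have hpred : (a : ℚ) - 1 + cf t ≠ 0 := by linarith [cf_nonneg t]
  have hsum : (a : ℚ) + cf t ≠ 0 := by linarith [cf_nonneg t]
  simp only [cf, Nat.cast_pred (by omega : 0 < a), Nat.cast_one]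
  rw [one_add_div hpred, one_div_div, one_sub_div hsum]
  ring

lemma ell_cons_succ (a : ℕ) (t : List ℕ) (k : ℕ) : ell (a :: t) (k + 1) = a + ell t k := by
  simp [ell]

lemma ell_length_s2 (l : List ℕ) : ell l l.length = l.sum := by
  simp [ell]

lemma lt_ell_one_cons_pred_cons_succ_iff {a i : ℕ} (ha : 1 ≤ a) (hi : 1 ≤ i) (t : List ℕ)
    (k : ℕ) : i < ell (1 :: (a - 1) :: t) (k + 1) ↔ i < ell (a :: t) k := by
  cases k with
  | zero =>
    simp only [ell, List.take_zero, List.take_succ_cons, List.sum_cons, List.sum_nil]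
    omega
  | succ k => simp only [ell_cons_succ]; omega

lemma fanIdx_one_cons_pred_cons {a i : ℕ} {t : List ℕ} (ha : 1 ≤ a) (hi : 1 ≤ i)
    (hlt : i < (a :: t).sum) :
    fanIdx (1 :: (a - 1) :: t) i = fanIdx (a :: t) i + 1 := by
  have hne : {k | i < ell (1 :: (a - 1) :: t) k}.Nonempty :=
    ⟨(a :: t).length + 1, (lt_ell_one_cons_pred_cons_succ_iff ha hi t _).2 (by rwa [ell_length_s2])⟩
  have hpos : 1 ≤ sInf {k | i < ell (1 :: (a - 1) :: t) k} := by
    refine Nat.one_le_iff_ne_zero.2 fun h0 => ?_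
    rcases Nat.sInf_eq_zero.1 h0 with h | h
    · simp [ell] at h
    · exact hne.ne_empty h
  rw [fanIdx, fanIdx, ← Nat.sInf_add hpos]
  simp only [lt_ell_one_cons_pred_cons_succ_iff ha hi]

lemma not_isRight_one_cons_pred_cons_iff {a i : ℕ} {t : List ℕ} (ha : 1 ≤ a) (hi : 1 ≤ i)
    (hlt : i < (a :: t).sum) :
    ¬ isRight (1 :: (a - 1) :: t) i ↔ isRight (a :: t) i := by
  rw [isRight, isRight, fanIdx_one_cons_pred_cons ha hi hlt, Nat.odd_add_one, not_not]

theorem mirror_ancestral_triangle_general (a1 : ℕ) (rest : List ℕ) (p q : ℕ)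
    (h2 : 2 ≤ a1) (hlt : p < q)
    (hval : cf (a1 :: rest) = (p : ℚ) / q) :
    cf (1 :: (a1 - 1) :: rest) = ((q : ℚ) - (p : ℚ)) / q ∧
    (1 :: (a1 - 1) :: rest).sum - 1 = (a1 :: rest).sum - 1 ∧
    ∀ i, 1 ≤ i → i ≤ (a1 :: rest).sum - 1 →
      (¬ isRight (1 :: (a1 - 1) :: rest) i ↔ isRight (a1 :: rest) i) := by
  refine ⟨?_, ?_, fun i hi hiN => not_isRight_one_cons_pred_cons_iff (by omega) hi (by omega)⟩
  · have hq : (q : ℚ) ≠ 0 := Nat.cast_ne_zero.2 (by omega)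
    rw [cf_one_cons_pred_cons h2, hval, sub_div, div_self hq]
  · simp only [List.sum_cons]
    omega

/-- **Proposition (mirror image).**  Let `p/q` be an irreducible fraction with
`0 < p/q < 1` and `p/q = [a₁,…,aₙ]` with `a₁ ≥ 2`.  Then `AT((q−p)/q)` is the mirror
image of `AT(p/q)`: `(q−p)/q = [1, a₁−1, a₂,…,aₙ]`, both ancestral triangles consist of
the same number `N = a₁ + ⋯ + aₙ − 1` of stacked triangles, and for every `1 ≤ i ≤ N` the
triangle `T_i` of `AT((q−p)/q)` is a left triangle iff the triangle `T_i` of `AT(p/q)` is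
a right triangle. -/
theorem mirror_ancestral_triangle (a1 : ℕ) (rest : List ℕ) (p q : ℕ)
    (h2 : 2 ≤ a1) (hpos : ∀ x ∈ rest, 0 < x)
    (hp : 0 < p) (hlt : p < q) (hcop : Nat.Coprime p q)
    (hval : cf (a1 :: rest) = (p : ℚ) / q) :
    cf (1 :: (a1 - 1) :: rest) = ((q : ℚ) - (p : ℚ)) / q ∧
    (1 :: (a1 - 1) :: rest).sum - 1 = (a1 :: rest).sum - 1 ∧
    ∀ i, 1 ≤ i → i ≤ (a1 :: rest).sum - 1 →
      (¬ isRight (1 :: (a1 - 1) :: rest) i ↔ isRight (a1 :: rest) i) :=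
  mirror_ancestral_triangle_general a1 rest p q h2 hlt hval

end TwoBridge

end
end

section
/- Let p/q be an irreducible fraction with 0 < p/q < 1, p/q = [a_1,…,a_n], a_1 ≥ 2, so that AT((q−p)/q) is the mirror image of AT(p/q) (the mirror correspondence exchanges the two bottom vertices 0/1 and 1/1 and matches the new vertex of the i-th triangle of one ancestral triangle with the new vertex of the i-th triangle of the other). Then the vertex of AT((q−p)/q) corresponding to a vertex of AT(p/q) labeled r/s is labeled (s−r)/s. -/
/-!
Ancestral triangles of continued fractions (Yamada / Farey diagrams),
following "Cluster variables and Alexander polynomials of 2-bridge knots".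
-/

noncomputable section

open scoped BigOperators

attribute [local instance] Classical.propDecidable

namespace TwoBridge

/-!
The mirror list `1 :: (a₁ - 1) :: rest` has the same partial sums as `a₁ :: rest`, shifted by
one fan, so every triangle `T_i` changes from right to left and vice versa. Stacking then
commutes with the involution `r/s ↦ (s - r)/s` composed with exchanging the two endpoints
of the active edge, because this involution is additive on labels with `r ≤ s`, i.e. it
preserves mediants.
-/

def mirrorLabel (x : ℕ × ℕ) : ℕ × ℕ := (x.2 - x.1, x.2)

theorem mirrorLabel_add {x y : ℕ × ℕ} (hx : x.1 ≤ x.2) (hy : y.1 ≤ y.2) :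
    mirrorLabel (x + y) = mirrorLabel x + mirrorLabel y := by
  ext
  · simp only [mirrorLabel, Prod.fst_add, Prod.snd_add]
    omega
  · rfl

theorem edgeLbl_succ (a : List ℕ) (i : ℕ) :
    edgeLbl a (i + 1) =
      if isRight a (i + 1) then ((edgeLbl a i).1, (edgeLbl a i).1 + (edgeLbl a i).2)
      else ((edgeLbl a i).1 + (edgeLbl a i).2, (edgeLbl a i).2) :=
  rfl

theorem vtxLabel_of_two_le (a : List ℕ) {v : ℕ} (hv : 2 ≤ v) :
    vtxLabel a v = (edgeLbl a (v - 2)).1 + (edgeLbl a (v - 2)).2 := by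
  simp only [vtxLabel, if_neg (show v ≠ 0 by omega), if_neg (show v ≠ 1 by omega)]
  rfl

theorem edgeLbl_num_le_den (a : List ℕ) (i : ℕ) :
    (edgeLbl a i).1.1 ≤ (edgeLbl a i).1.2 ∧ (edgeLbl a i).2.1 ≤ (edgeLbl a i).2.2 := by
  induction i with
  | zero => simp [edgeLbl]
  | succ i ih =>
    rw [edgeLbl_succ]
    split_ifs <;> simp only [Prod.fst_add, Prod.snd_add] <;> omega

theorem edgeLbl_eq_mirrorLabel {a b : List ℕ} {n : ℕ}
    (hflip : ∀ j, 1 ≤ j → j ≤ n → (isRight b j ↔ ¬ isRight a j)) :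
    edgeLbl b n = (mirrorLabel (edgeLbl a n).2, mirrorLabel (edgeLbl a n).1) := by
  induction n with
  | zero => rfl
  | succ n ih =>
    obtain ⟨hl, hr⟩ := edgeLbl_num_le_den a n
    have hmed := mirrorLabel_add hl hr
    rw [edgeLbl_succ, edgeLbl_succ, ih fun j hj hjn => hflip j hj (by omega)]
    by_cases ha : isRight a (n + 1)
    · rw [if_pos ha, if_neg ((hflip _ (by omega) le_rfl).not.mpr (not_not.mpr ha)), hmed,
        add_comm]
    · rw [if_neg ha, if_pos ((hflip _ (by omega) le_rfl).mpr ha), hmed, add_comm]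

theorem vtxLabel_eq_mirrorLabel {a b : List ℕ} {v : ℕ} (hv : 2 ≤ v)
    (hflip : ∀ j, 1 ≤ j → j ≤ v - 2 → (isRight b j ↔ ¬ isRight a j)) :
    vtxLabel b v = mirrorLabel (vtxLabel a v) := by
  obtain ⟨hl, hr⟩ := edgeLbl_num_le_den a (v - 2)
  rw [vtxLabel_of_two_le a hv, vtxLabel_of_two_le b hv, edgeLbl_eq_mirrorLabel hflip,
    mirrorLabel_add hl hr, add_comm]

theorem ell_cons_split_succ_succ {c a₁ : ℕ} (hc : c ≤ a₁) (rest : List ℕ) (k : ℕ) :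
    ell (c :: (a₁ - c) :: rest) (k + 2) = ell (a₁ :: rest) (k + 1) := by
  simp only [ell, List.take_succ_cons, List.sum_cons]
  omega

theorem fanIdx_cons_split {c a₁ i : ℕ} {rest : List ℕ} (hc : c ≤ a₁) (hci : c ≤ i)
    (hi : i < (a₁ :: rest).sum) :
    fanIdx (c :: (a₁ - c) :: rest) i = fanIdx (a₁ :: rest) i + 1 := by
  have hne : {k | i < ell (a₁ :: rest) k}.Nonempty :=
    ⟨rest.length + 1, by simpa [ell] using hi⟩
  have hpos : 0 < fanIdx (a₁ :: rest) i := by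
    refine Nat.pos_of_ne_zero fun h0 => ?_
    rcases Nat.sInf_eq_zero.mp h0 with h | h
    · simp [ell] at h
    · exact hne.ne_empty h
  rw [fanIdx, fanIdx, Nat.sInf_add' hpos]
  congr with m
  match m with
  | 0 => simp [ell]
  | 1 => simpa [ell] using hci
  | k + 2 => simp [ell_cons_split_succ_succ hc]

theorem isRight_cons_split_iff {c a₁ i : ℕ} {rest : List ℕ} (hc : c ≤ a₁) (hci : c ≤ i)
    (hi : i < (a₁ :: rest).sum) :
    isRight (c :: (a₁ - c) :: rest) i ↔ ¬ isRight (a₁ :: rest) i := by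
  rw [isRight, isRight, fanIdx_cons_split hc hci hi, Nat.odd_add_one]

theorem mirror_labels_general (a1 : ℕ) (rest : List ℕ) (h2 : 2 ≤ a1) :
    (vtxLabel (1 :: (a1 - 1) :: rest) 1 =
        ((vtxLabel (a1 :: rest) 0).2 - (vtxLabel (a1 :: rest) 0).1,
          (vtxLabel (a1 :: rest) 0).2)) ∧
    (vtxLabel (1 :: (a1 - 1) :: rest) 0 =
        ((vtxLabel (a1 :: rest) 1).2 - (vtxLabel (a1 :: rest) 1).1,
          (vtxLabel (a1 :: rest) 1).2)) ∧
    ∀ i, 1 ≤ i → i ≤ (a1 :: rest).sum - 1 →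
      vtxLabel (1 :: (a1 - 1) :: rest) (i + 1) =
        ((vtxLabel (a1 :: rest) (i + 1)).2 - (vtxLabel (a1 :: rest) (i + 1)).1,
          (vtxLabel (a1 :: rest) (i + 1)).2) := by
  refine ⟨by simp [vtxLabel], by simp [vtxLabel], fun i hi hin => ?_⟩
  exact vtxLabel_eq_mirrorLabel (by omega) fun j hj hji =>
    isRight_cons_split_iff (by omega) hj (by omega)

/-- **Proposition (labels of the mirror image).**  Let `p/q = [a₁,…,aₙ]` be an irreducible
fraction with `0 < p/q < 1` and `a₁ ≥ 2`, so that `AT((q−p)/q)`, the ancestral triangle of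
`[1, a₁−1, a₂,…,aₙ]`, is the mirror image of `AT(p/q)`; the mirror correspondence
exchanges the two bottom vertices `0/1` (index 0) and `1/1` (index 1) and matches the new
vertex of the `i`-th triangle of one ancestral triangle (index `i + 1`) with the new
vertex of the `i`-th triangle of the other.  Then the vertex of `AT((q−p)/q)`
corresponding to a vertex of `AT(p/q)` labeled `r/s` is labeled `(s−r)/s`. -/
theorem mirror_labels (a1 : ℕ) (rest : List ℕ) (p q : ℕ)
    (h2 : 2 ≤ a1) (hpos : ∀ x ∈ rest, 0 < x)
    (hp : 0 < p) (hlt : p < q) (hcop : Nat.Coprime p q)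
    (hval : cf (a1 :: rest) = (p : ℚ) / q) :
    (vtxLabel (1 :: (a1 - 1) :: rest) 1 =
        ((vtxLabel (a1 :: rest) 0).2 - (vtxLabel (a1 :: rest) 0).1,
          (vtxLabel (a1 :: rest) 0).2)) ∧
    (vtxLabel (1 :: (a1 - 1) :: rest) 0 =
        ((vtxLabel (a1 :: rest) 1).2 - (vtxLabel (a1 :: rest) 1).1,
          (vtxLabel (a1 :: rest) 1).2)) ∧
    ∀ i, 1 ≤ i → i ≤ (a1 :: rest).sum - 1 →
      vtxLabel (1 :: (a1 - 1) :: rest) (i + 1) =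
        ((vtxLabel (a1 :: rest) (i + 1)).2 - (vtxLabel (a1 :: rest) (i + 1)).1,
          (vtxLabel (a1 :: rest) (i + 1)).2) :=
  mirror_labels_general a1 rest h2

end TwoBridge

end
end

section
/- Let p/q = [a_1,…,a_n] be an irreducible fraction with 0 < p/q < 1, a_1 ≥ 2, and N = a_1 + ⋯ + a_n − 1. Then the F-polynomials satisfy F_{(q−p)/q}(y_1,…,y_N) = y_1 y_2 ⋯ y_N · F_{p/q}(y_1^{−1}, y_2^{−1},…, y_N^{−1}). -/
/-!
Ancestral triangles of continued fractions (Yamada / Farey diagrams),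
following "Cluster variables and Alexander polynomials of 2-bridge knots".
-/

noncomputable section

open scoped BigOperators

attribute [local instance] Classical.propDecidable

namespace TwoBridge

/-- The `F`-polynomial `F_{p/q} = Σ_{γ ∈ Γ_{p/q}} ∏_{T_i ∈ S_γ} y_i` of `p/q = [a₁,…,aₙ]`
(the variable `y_i` is `MvPolynomial.X i`; the top vertex has index `a.sum = N + 1`).
For the empty continued fraction this gives `1`. -/
def Fpoly (a : List ℕ) : MvPolynomial ℕ ℤ :=
  ∑ᶠ γ ∈ {γ : List ℕ | IsPathFrom a a.sum γ},
    ∏ i ∈ pathLeftSet a γ, (MvPolynomial.X i : MvPolynomial ℕ ℤ)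

/-- `F`-polynomial with the convention `F[a₁,…,a_{n−1},0] = F[a₁,…,a_{n−2}]`. -/
def FpolyC (l : List ℕ) : MvPolynomial ℕ ℤ :=
  if l.getLast? = some 0 then Fpoly l.dropLast.dropLast else Fpoly l

/-!
Reflecting the ancestral triangle of `[a₁, a₂, …, aₙ]` in the vertical axis exchanges the base
vertices `0/1` and `1/1` and turns every right triangle into a left one and vice versa; since
`[1, a₁ - 1, a₂, …, aₙ]` has the same triangles with the fan parities shifted by one, the
reflection is the ancestral triangle of `(q - p)/q`. Denominators of the labels are preserved,
so paths correspond to paths, and the triangles left of the reflected path are exactly those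
right of the original one. A path splits the `N` triangles into its left and right sides, so
each monomial `∏_{S_γ} y_i` of `F_{p/q}` becomes `∏_{i ∉ S_γ} y_i = y₁ ⋯ y_N ∏_{S_γ} y_i⁻¹`.
-/

section AncestralTriangle

variable {b : List ℕ}

lemma edgeIdx_le (b : List ℕ) (i : ℕ) :
    (edgeIdx b i).1 ≤ i + 1 ∧ (edgeIdx b i).2 ≤ i + 1 := by
  induction i with
  | zero => simp [edgeIdx]
  | succ i ih => rw [edgeIdx]; split <;> simp <;> omega

lemma edgeIdx_fst_ne_snd (b : List ℕ) (i : ℕ) : (edgeIdx b i).1 ≠ (edgeIdx b i).2 := by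
  cases i with
  | zero => simp [edgeIdx]
  | succ i =>
    have := edgeIdx_le b i
    rw [edgeIdx]; split <;> simp <;> omega

lemma one_le_edgeLbl_den (b : List ℕ) (i : ℕ) :
    1 ≤ (edgeLbl b i).1.2 ∧ 1 ≤ (edgeLbl b i).2.2 := by
  induction i with
  | zero => simp [edgeLbl]
  | succ i ih => rw [edgeLbl]; split <;> simp <;> omega

lemma vtxLabel_edgeIdx (b : List ℕ) (i : ℕ) :
    vtxLabel b (edgeIdx b i).1 = (edgeLbl b i).1 ∧
      vtxLabel b (edgeIdx b i).2 = (edgeLbl b i).2 := by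
  induction i with
  | zero => simp [edgeIdx, edgeLbl, vtxLabel]
  | succ i ih =>
    rw [edgeIdx, edgeLbl]
    split
    · exact ⟨ih.1, by simp [vtxLabel]⟩
    · exact ⟨by simp [vtxLabel], ih.2⟩

lemma vtxLabel_add_two (b : List ℕ) (i : ℕ) :
    vtxLabel b (i + 2) =
      ((edgeLbl b i).1.1 + (edgeLbl b i).2.1, (edgeLbl b i).1.2 + (edgeLbl b i).2.2) := by
  simp [vtxLabel]

lemma vtxLabel_den_lt_of_mem_edgeIdx {i j : ℕ}
    (hj : j = (edgeIdx b i).1 ∨ j = (edgeIdx b i).2) :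
    (vtxLabel b j).2 < (vtxLabel b (i + 2)).2 := by
  have hlbl := vtxLabel_edgeIdx b i
  have hden := one_le_edgeLbl_den b i
  rw [vtxLabel_add_two]
  rcases hj with rfl | rfl
  · rw [hlbl.1]; omega
  · rw [hlbl.2]; omega

/-- An apex has a larger denominator than both endpoints of the edge it sits on, so a step always
goes from an apex down to that edge. -/
lemma isStep_iff {u w : ℕ} :
    IsStep b u w ↔
      2 ≤ u ∧ (w = (edgeIdx b (u - 2)).1 ∨ w = (edgeIdx b (u - 2)).2) ∧
        (vtxLabel b w).2 < (vtxLabel b u).2 := by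
  refine ⟨?_, fun ⟨hu, hw, hd⟩ => ⟨Or.inr (Or.inr (Or.inl ⟨hu, hw⟩)), hd⟩⟩
  rintro ⟨he, hd⟩
  rcases he with ⟨rfl, rfl⟩ | ⟨rfl, rfl⟩ | ⟨hu, hw⟩ | ⟨hw, hu⟩
  · simp [vtxLabel] at hd
  · simp [vtxLabel] at hd
  · exact ⟨hu, hw, hd⟩
  · have := vtxLabel_den_lt_of_mem_edgeIdx (b := b) hu
    rw [Nat.sub_add_cancel hw] at this
    omega

lemma IsStep.lt {u w : ℕ} (h : IsStep b u w) : w < u := by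
  obtain ⟨hu, hw, -⟩ := isStep_iff.1 h
  have := edgeIdx_le b (u - 2)
  omega

lemma isPathFrom_cons_cons {u v : ℕ} {γ : List ℕ} :
    IsPathFrom b u (u :: v :: γ) ↔ IsStep b u v ∧ IsPathFrom b v (v :: γ) := by
  simp only [IsPathFrom, List.head?_cons, List.getLast?_cons_cons, true_and]
  exact ⟨fun ⟨hl, hc⟩ => ⟨(List.isChain_cons_cons.mp hc).1, hl, (List.isChain_cons_cons.mp hc).2⟩,
    fun ⟨hs, hl, hc⟩ => ⟨hl, List.isChain_cons_cons.mpr ⟨hs, hc⟩⟩⟩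

lemma IsPathFrom.pairwise_gt {u : ℕ} {γ : List ℕ} (h : IsPathFrom b u γ) :
    γ.Pairwise (· > ·) :=
  List.isChain_iff_pairwise.mp (h.2.2.imp fun _ _ hs => hs.lt)

lemma IsPathFrom.le_of_mem {u v : ℕ} {γ : List ℕ} (h : IsPathFrom b u γ) (hv : v ∈ γ) :
    v ≤ u := by
  obtain ⟨t, rfl⟩ : ∃ t, γ = u :: t := by
    cases γ with
    | nil => simp [IsPathFrom] at h
    | cons x t => exact ⟨t, by simpa [IsPathFrom] using h.1⟩
  rcases List.mem_cons.mp hv with rfl | hv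
  · exact le_rfl
  · exact (List.rel_of_pairwise_cons h.pairwise_gt hv).le

/-- Paths are strictly decreasing lists of vertices, so they are determined by their sets of
vertices, all of which lie in `{0, …, u}`. -/
lemma finite_setOf_isPathFrom (b : List ℕ) (u : ℕ) : {γ : List ℕ | IsPathFrom b u γ}.Finite := by
  refine Set.Finite.of_finite_image (f := List.toFinset) ?_ ?_
  · refine ((Finset.range (u + 1)).powerset.finite_toSet).subset ?_
    rintro _ ⟨γ, hγ, rfl⟩
    simp only [Finset.coe_powerset, Set.mem_preimage, Set.mem_powerset_iff, Finset.coe_subset,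
      Finset.subset_iff, List.mem_toFinset, Finset.mem_range]
    exact fun v hv => Nat.lt_succ_of_le (hγ.le_of_mem hv)
  · intro γ₁ h₁ γ₂ h₂ he
    have s₁ := IsPathFrom.pairwise_gt h₁
    have s₂ := IsPathFrom.pairwise_gt h₂
    exact List.Perm.eq_of_pairwise' s₁ s₂
      (List.perm_of_nodup_nodup_toFinset_eq s₁.nodup s₂.nodup he)

end AncestralTriangle

section Sides

def stepRight (b : List ℕ) (u w : ℕ) : Finset ℕ :=
  if 2 ≤ u ∧ w = (edgeIdx b (u - 2)).1 then Finset.Ioc (w - 1) (u - 1) else ∅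

def pathRightSet (b : List ℕ) (γ : List ℕ) : Finset ℕ :=
  (γ.zip γ.tail).foldr (fun p s => stepRight b p.1 p.2 ∪ s) ∅

variable {b : List ℕ}

lemma pathLeftSet_cons_cons (x y : ℕ) (γ : List ℕ) :
    pathLeftSet b (x :: y :: γ) = stepLeft b x y ∪ pathLeftSet b (y :: γ) := rfl

lemma pathRightSet_cons_cons (x y : ℕ) (γ : List ℕ) :
    pathRightSet b (x :: y :: γ) = stepRight b x y ∪ pathRightSet b (y :: γ) := rfl

lemma stepLeft_union_stepRight {x y : ℕ} (h : IsStep b x y) :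
    stepLeft b x y ∪ stepRight b x y = Finset.Ioc (y - 1) (x - 1) := by
  obtain ⟨hx, hy, -⟩ := isStep_iff.1 h
  have hne := edgeIdx_fst_ne_snd b (x - 2)
  unfold stepLeft stepRight
  rcases hy with rfl | rfl <;> simp [hx, hne, Ne.symm hne]

lemma disjoint_stepLeft_stepRight (b : List ℕ) (x y : ℕ) :
    Disjoint (stepLeft b x y) (stepRight b x y) := by
  unfold stepLeft stepRight
  split_ifs with hl hr
  · exact absurd (hr.2.symm.trans hl.2) (edgeIdx_fst_ne_snd b (x - 2))
  all_goals simp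

lemma IsPathFrom.pathLeftSet_union_pathRightSet {u : ℕ} {γ : List ℕ} (h : IsPathFrom b u γ) :
    pathLeftSet b γ ∪ pathRightSet b γ = Finset.Ioc 0 (u - 1) := by
  induction γ generalizing u with
  | nil => simp [IsPathFrom] at h
  | cons x γ ih =>
    obtain rfl : x = u := by simpa [IsPathFrom] using h.1
    cases γ with
    | nil =>
      have : x = 0 ∨ x = 1 := by simpa [IsPathFrom] using h.2.1
      rcases this with rfl | rfl <;> rfl
    | cons y γ =>
      obtain ⟨hs, ht⟩ := isPathFrom_cons_cons.1 h
      have hyx := hs.lt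
      rw [pathLeftSet_cons_cons, pathRightSet_cons_cons, Finset.union_union_union_comm,
        stepLeft_union_stepRight hs, ih ht, Finset.union_comm,
        Finset.Ioc_union_Ioc_eq_Ioc (Nat.zero_le _) (by omega)]

lemma IsPathFrom.disjoint_pathLeftSet_pathRightSet {u : ℕ} {γ : List ℕ}
    (h : IsPathFrom b u γ) : Disjoint (pathLeftSet b γ) (pathRightSet b γ) := by
  induction γ generalizing u with
  | nil => simp [IsPathFrom] at h
  | cons x γ ih =>
    obtain rfl : x = u := by simpa [IsPathFrom] using h.1
    cases γ with
    | nil => simp [pathLeftSet]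
    | cons y γ =>
      obtain ⟨hs, ht⟩ := isPathFrom_cons_cons.1 h
      have hstep := stepLeft_union_stepRight hs
      have htail := ht.pathLeftSet_union_pathRightSet
      have hI : Disjoint (Finset.Ioc (y - 1) (x - 1)) (Finset.Ioc 0 (y - 1)) := by
        simp only [Finset.disjoint_left, Finset.mem_Ioc]
        omega
      rw [pathLeftSet_cons_cons, pathRightSet_cons_cons, Finset.disjoint_union_left,
        Finset.disjoint_union_right, Finset.disjoint_union_right]
      exact ⟨⟨disjoint_stepLeft_stepRight b x y,
          hI.mono (hstep ▸ Finset.subset_union_left) (htail ▸ Finset.subset_union_right)⟩,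
        (hI.mono (hstep ▸ Finset.subset_union_right) (htail ▸ Finset.subset_union_left)).symm,
        ih ht⟩

lemma IsPathFrom.pathLeftSet_subset {u : ℕ} {γ : List ℕ} (h : IsPathFrom b u γ) :
    pathLeftSet b γ ⊆ Finset.Ioc 0 (u - 1) :=
  h.pathLeftSet_union_pathRightSet ▸ Finset.subset_union_left

lemma IsPathFrom.pathRightSet_eq_sdiff {u : ℕ} {γ : List ℕ} (h : IsPathFrom b u γ) :
    pathRightSet b γ = Finset.Ioc 0 (u - 1) \ pathLeftSet b γ := by
  rw [← h.pathLeftSet_union_pathRightSet,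
    Finset.union_sdiff_cancel_left h.disjoint_pathLeftSet_pathRightSet]

end Sides

section Mirror

/-- Reflection on vertex indices: it swaps the base vertices `0/1` and `1/1` and fixes every
apex. -/
def mirrorVtx (v : ℕ) : ℕ := if v = 0 then 1 else if v = 1 then 0 else v

lemma mirrorVtx_involutive : Function.Involutive mirrorVtx := by
  intro v
  rcases v with _ | _ | v <;> simp [mirrorVtx]

lemma mirrorVtx_of_two_le {v : ℕ} (h : 2 ≤ v) : mirrorVtx v = v := by
  rcases v with _ | _ | v <;> simp [mirrorVtx] <;> omega

lemma mirrorVtx_sub_one (v : ℕ) : mirrorVtx v - 1 = v - 1 := by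
  rcases v with _ | _ | v <;> simp [mirrorVtx]

/-- The ancestral triangle of `a'` is the mirror image of that of `a`: it has the same
triangles, each with the opposite orientation. -/
structure IsMirror (a a' : List ℕ) : Prop where
  sum_eq : a'.sum = a.sum
  isRight_iff : ∀ ⦃i⦄, 1 ≤ i → i < a.sum → (isRight a' i ↔ ¬ isRight a i)

lemma IsMirror.symm {a a' : List ℕ} (hm : IsMirror a a') : IsMirror a' a where
  sum_eq := hm.sum_eq.symm
  isRight_iff i h1 hi := by
    rw [hm.isRight_iff h1 (hm.sum_eq ▸ hi), not_not]

lemma lt_ell_cons_one_iff {a1 : ℕ} {rest : List ℕ} (h1 : 1 ≤ a1) {i : ℕ} (hi : 1 ≤ i) (k : ℕ) :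
    i < ell (1 :: (a1 - 1) :: rest) (k + 1) ↔ i < ell (a1 :: rest) k := by
  rcases k with _ | k <;> simp [ell] <;> omega

lemma fanIdx_cons_one {a1 : ℕ} {rest : List ℕ} (h1 : 1 ≤ a1) {i : ℕ} (hi : 1 ≤ i)
    (hiN : i < (a1 :: rest).sum) :
    fanIdx (1 :: (a1 - 1) :: rest) i = fanIdx (a1 :: rest) i + 1 := by
  have hsum : (1 :: (a1 - 1) :: rest).sum = (a1 :: rest).sum := by
    simp only [List.sum_cons]; omega
  have hpos : 1 ≤ fanIdx (1 :: (a1 - 1) :: rest) i := by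
    rw [Nat.one_le_iff_ne_zero, fanIdx, Ne, Nat.sInf_eq_zero, not_or]
    refine ⟨by simp [ell], Set.nonempty_iff_ne_empty.mp ⟨(1 :: (a1 - 1) :: rest).length, ?_⟩⟩
    simpa [ell, hsum] using hiN
  rw [fanIdx] at hpos ⊢
  rw [← Nat.sInf_add hpos, fanIdx]
  simp only [lt_ell_cons_one_iff h1 hi]

lemma isMirror_cons_one {a1 : ℕ} {rest : List ℕ} (h1 : 1 ≤ a1) :
    IsMirror (a1 :: rest) (1 :: (a1 - 1) :: rest) where
  sum_eq := by simp only [List.sum_cons]; omega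
  isRight_iff i hi hiN := by rw [isRight, isRight, fanIdx_cons_one h1 hi hiN, Nat.odd_add_one]

namespace IsMirror

variable {a a' : List ℕ}

lemma edgeIdx_eq (hm : IsMirror a a') {i : ℕ} (hi : i < a.sum) :
    edgeIdx a' i = (mirrorVtx (edgeIdx a i).2, mirrorVtx (edgeIdx a i).1) := by
  induction i with
  | zero => simp [edgeIdx, mirrorVtx]
  | succ i ih =>
    have hflip := hm.isRight_iff (Nat.succ_pos i) hi
    rw [edgeIdx, edgeIdx, ih (by omega)]
    by_cases h : isRight a (i + 1) <;>
      simp [h, hflip, mirrorVtx_of_two_le (show 2 ≤ i + 2 by omega)]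

lemma edgeLbl_den_eq (hm : IsMirror a a') {i : ℕ} (hi : i < a.sum) :
    (edgeLbl a' i).1.2 = (edgeLbl a i).2.2 ∧ (edgeLbl a' i).2.2 = (edgeLbl a i).1.2 := by
  induction i with
  | zero => simp [edgeLbl]
  | succ i ih =>
    have hflip := hm.isRight_iff (Nat.succ_pos i) hi
    have := ih (by omega)
    rw [edgeLbl, edgeLbl]
    by_cases h : isRight a (i + 1) <;> simp [h, hflip] <;> omega

lemma vtxLabel_mirrorVtx_den (hm : IsMirror a a') {v : ℕ} (hv : v ≤ a.sum) :
    (vtxLabel a' (mirrorVtx v)).2 = (vtxLabel a v).2 := by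
  rcases Nat.lt_or_ge v 2 with h | h
  · interval_cases v <;> simp [mirrorVtx, vtxLabel]
  · obtain ⟨j, rfl⟩ : ∃ j, v = j + 2 := ⟨v - 2, by omega⟩
    have := hm.edgeLbl_den_eq (i := j) (by omega)
    rw [mirrorVtx_of_two_le h, vtxLabel_add_two, vtxLabel_add_two]
    omega

lemma isStep_mirrorVtx_iff (hm : IsMirror a a') {u w : ℕ} (hu : u ≤ a.sum) :
    IsStep a' (mirrorVtx u) (mirrorVtx w) ↔ IsStep a u w := by
  by_cases hu2 : 2 ≤ u
  · have hb := edgeIdx_le a (u - 2)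
    have hdu := hm.vtxLabel_mirrorVtx_den hu
    rw [mirrorVtx_of_two_le hu2] at hdu
    rw [isStep_iff, isStep_iff, mirrorVtx_of_two_le hu2, hm.edgeIdx_eq (by omega),
      mirrorVtx_involutive.injective.eq_iff, mirrorVtx_involutive.injective.eq_iff, or_comm]
    refine and_congr_right fun _ => and_congr_right fun hw => ?_
    rw [hdu, hm.vtxLabel_mirrorVtx_den (by omega)]
  · have : mirrorVtx u < 2 := by
      rcases (show u = 0 ∨ u = 1 by omega) with rfl | rfl <;> simp [mirrorVtx]
    simp only [isStep_iff]
    omega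

lemma stepLeft_mirrorVtx (hm : IsMirror a a') {x : ℕ} (hx : x ≤ a.sum) (y : ℕ) :
    stepLeft a' (mirrorVtx x) (mirrorVtx y) = stepRight a x y := by
  by_cases hx2 : 2 ≤ x
  · simp only [stepLeft, stepRight, mirrorVtx_of_two_le hx2, hm.edgeIdx_eq (i := x - 2) (by omega),
      mirrorVtx_involutive.injective.eq_iff, mirrorVtx_sub_one]
  · have : mirrorVtx x < 2 := by
      rcases (show x = 0 ∨ x = 1 by omega) with rfl | rfl <;> simp [mirrorVtx]
    rw [stepLeft, stepRight, if_neg (by omega), if_neg (by omega)]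

lemma pathLeftSet_map_mirrorVtx (hm : IsMirror a a') {γ : List ℕ} (hb : ∀ v ∈ γ, v ≤ a.sum) :
    pathLeftSet a' (γ.map mirrorVtx) = pathRightSet a γ := by
  induction γ with
  | nil => rfl
  | cons x γ ih =>
    cases γ with
    | nil => rfl
    | cons y γ =>
      rw [List.map_cons, List.map_cons, pathLeftSet_cons_cons, pathRightSet_cons_cons,
        hm.stepLeft_mirrorVtx (hb x List.mem_cons_self), ← List.map_cons,
        ih fun v hv => hb v (List.mem_cons_of_mem _ hv)]

lemma isChain_map_mirrorVtx_iff (hm : IsMirror a a') {γ : List ℕ} (hb : ∀ v ∈ γ, v ≤ a.sum) :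
    (γ.map mirrorVtx).IsChain (IsStep a') ↔ γ.IsChain (IsStep a) := by
  rw [List.isChain_map]
  exact List.IsChain.iff_of_mem_imp fun u _ hu _ => hm.isStep_mirrorVtx_iff (hb u hu)

lemma isPathFrom_map_mirrorVtx (hm : IsMirror a a') (hs : 2 ≤ a.sum) {γ : List ℕ}
    (h : IsPathFrom a a.sum γ) : IsPathFrom a' a.sum (γ.map mirrorVtx) := by
  refine ⟨?_, ?_, (hm.isChain_map_mirrorVtx_iff fun v hv => h.le_of_mem hv).2 h.2.2⟩
  · rw [List.head?_map, h.1, Option.map_some, mirrorVtx_of_two_le hs]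
  · rw [List.getLast?_map]
    rcases h.2.1 with h | h <;> simp [h, mirrorVtx]

lemma setOf_isPathFrom_eq_image (hm : IsMirror a a') (hs : 2 ≤ a.sum) :
    {γ | IsPathFrom a' a.sum γ} = List.map mirrorVtx '' {γ | IsPathFrom a a.sum γ} := by
  ext δ
  refine ⟨fun h => ⟨δ.map mirrorVtx, ?_, ?_⟩,
    fun ⟨γ, hγ, hδ⟩ => hδ ▸ hm.isPathFrom_map_mirrorVtx hs hγ⟩
  · have := hm.symm.isPathFrom_map_mirrorVtx (hm.sum_eq ▸ hs) (hm.sum_eq ▸ h)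
    rwa [hm.sum_eq] at this
  · rw [List.map_map, mirrorVtx_involutive.comp_self, List.map_id]

end IsMirror

end Mirror

lemma Fpoly_eq_sum (a : List ℕ) :
    Fpoly a = ∑ γ ∈ (finite_setOf_isPathFrom a a.sum).toFinset,
      ∏ i ∈ pathLeftSet a γ, (MvPolynomial.X i : MvPolynomial ℕ ℤ) := by
  rw [Fpoly, finsum_mem_eq_finite_toFinset_sum]

lemma IsMirror.Fpoly_eq_sum {a a' : List ℕ} (hm : IsMirror a a') (hs : 2 ≤ a.sum) :
    Fpoly a' = ∑ γ ∈ (finite_setOf_isPathFrom a a.sum).toFinset,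
      ∏ i ∈ Finset.Ioc 0 (a.sum - 1) \ pathLeftSet a γ, (MvPolynomial.X i : MvPolynomial ℕ ℤ) := by
  rw [Fpoly, hm.sum_eq, hm.setOf_isPathFrom_eq_image hs,
    finsum_mem_image (List.map_injective_iff.2 mirrorVtx_involutive.injective).injOn,
    finsum_mem_eq_finite_toFinset_sum _ (finite_setOf_isPathFrom a a.sum)]
  refine Finset.sum_congr rfl fun γ hγ => ?_
  rw [Set.Finite.mem_toFinset] at hγ
  rw [hm.pathLeftSet_map_mirrorVtx fun v hv => hγ.le_of_mem hv, hγ.pathRightSet_eq_sdiff]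

lemma prod_sdiff_eq_prod_mul_prod_inv {ι K : Type*} [DecidableEq ι] [CommGroupWithZero K]
    {s t : Finset ι} {f : ι → K} (hst : s ⊆ t) (hf : ∀ i ∈ s, f i ≠ 0) :
    ∏ i ∈ t \ s, f i = (∏ i ∈ t, f i) * ∏ i ∈ s, (f i)⁻¹ := by
  rw [← Finset.prod_sdiff hst, mul_assoc, ← Finset.prod_mul_distrib,
    Finset.prod_congr rfl fun i hi => mul_inv_cancel₀ (hf i hi), Finset.prod_const_one, mul_one]

theorem mirror_F_polynomial_general (a1 : ℕ) (rest : List ℕ)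
    (h2 : 2 ≤ a1) :
    algebraMap (MvPolynomial ℕ ℤ) (FractionRing (MvPolynomial ℕ ℤ))
        (Fpoly (1 :: (a1 - 1) :: rest)) =
      (∏ i ∈ Finset.Icc 1 ((a1 :: rest).sum - 1),
          algebraMap (MvPolynomial ℕ ℤ) (FractionRing (MvPolynomial ℕ ℤ))
            (MvPolynomial.X i)) *
        MvPolynomial.eval₂ (algebraMap ℤ (FractionRing (MvPolynomial ℕ ℤ)))
          (fun i =>
            (algebraMap (MvPolynomial ℕ ℤ) (FractionRing (MvPolynomial ℕ ℤ))
                (MvPolynomial.X i))⁻¹)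
          (Fpoly (a1 :: rest)) := by
  have hm : IsMirror (a1 :: rest) (1 :: (a1 - 1) :: rest) := isMirror_cons_one (by omega)
  have hs : 2 ≤ (a1 :: rest).sum := by simp only [List.sum_cons]; omega
  have hX (i : ℕ) : algebraMap (MvPolynomial ℕ ℤ) (FractionRing (MvPolynomial ℕ ℤ))
      (MvPolynomial.X i) ≠ 0 :=
    (map_ne_zero_iff _ (IsFractionRing.injective _ _)).2 (MvPolynomial.X_ne_zero i)
  have hI : Finset.Icc 1 ((a1 :: rest).sum - 1) = Finset.Ioc 0 ((a1 :: rest).sum - 1) :=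
    Finset.Icc_add_one_left_eq_Ioc 0 _
  rw [hm.Fpoly_eq_sum hs, Fpoly_eq_sum, map_sum, MvPolynomial.eval₂_sum, Finset.mul_sum, hI]
  refine Finset.sum_congr rfl fun γ hγ => ?_
  rw [map_prod, MvPolynomial.eval₂_prod]
  simp only [MvPolynomial.eval₂_X]
  exact prod_sdiff_eq_prod_mul_prod_inv
    ((Set.Finite.mem_toFinset _).1 hγ).pathLeftSet_subset fun i _ => hX i

/-- **Corollary (mirror F-polynomial).**  Let `p/q = [a₁,…,aₙ]` be an irreducible fraction
with `0 < p/q < 1`, `a₁ ≥ 2`, and `N = a₁ + ⋯ + aₙ − 1`.  Then the `F`-polynomials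
satisfy `F_{(q−p)/q}(y₁,…,y_N) = y₁ y₂ ⋯ y_N · F_{p/q}(y₁⁻¹, y₂⁻¹, …, y_N⁻¹)`
(an identity in the field of rational functions in the `y_i`, where
`(q−p)/q = [1, a₁−1, a₂,…,aₙ]`). -/
theorem mirror_F_polynomial (a1 : ℕ) (rest : List ℕ) (p q : ℕ)
    (h2 : 2 ≤ a1) (hpos : ∀ x ∈ rest, 0 < x)
    (hp : 0 < p) (hlt : p < q) (hcop : Nat.Coprime p q)
    (hval : cf (a1 :: rest) = (p : ℚ) / q) :
    algebraMap (MvPolynomial ℕ ℤ) (FractionRing (MvPolynomial ℕ ℤ))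
        (Fpoly (1 :: (a1 - 1) :: rest)) =
      (∏ i ∈ Finset.Icc 1 ((a1 :: rest).sum - 1),
          algebraMap (MvPolynomial ℕ ℤ) (FractionRing (MvPolynomial ℕ ℤ))
            (MvPolynomial.X i)) *
        MvPolynomial.eval₂ (algebraMap ℤ (FractionRing (MvPolynomial ℕ ℤ)))
          (fun i =>
            (algebraMap (MvPolynomial ℕ ℤ) (FractionRing (MvPolynomial ℕ ℤ))
                (MvPolynomial.X i))⁻¹)
          (Fpoly (a1 :: rest)) :=
  mirror_F_polynomial_general a1 rest h2

end TwoBridge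

end
end
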